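/- Let F be a finite family of self-maps of a space X and d a pseudometric on X. Suppose for some m ∈ ℕ and λ < 1 one has dω_{F^m}(t) ≤ λ·t for all t ≥ 0 (F^m is Banach contracting with constant λ). Choose a > 1 with a^m λ < 1 and define d̂(x,y) = sup_{n∈ω} sup_{f∈F^n} a^n d(f(x),f(y)). Then d̂ is a well-defined pseudometric satisfying d̂ ≥ d, and every f ∈ F is Banach contracting with respect to d̂ with constant 1/a: d̂(f(x),f(y)) ≤ (1/a)·d̂(x,y) for all x,y ∈ X. -/

import Mathlib

open Filter Topology ENNReal

/-- The set `F^n` of all compositions of `n` members of a family `F` of self-maps. -/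
def comps {X : Type*} (F : Set (X → X)) : ℕ → Set (X → X)
  | 0 => {id}
  | n + 1 => Set.image2 (· ∘ ·) (comps F n) F

/-- The oscillation of a family `G` of self-maps with respect to a pseudometric `d`. -/
noncomputable def oscFam {X : Type*} (d : X → X → ℝ≥0∞) (G : Set (X → X)) (t : ℝ≥0∞) :
    ℝ≥0∞ :=
  ⨆ g ∈ G, ⨆ (x : X) (y : X) (_ : d x y ≤ t), d (g x) (g y)

/-!
Split an index `n` as `n = m q + r` with `r < m`. An element of `F^n` is then a composition of
`q` elements of `F^m`, each contracting `d` by `λ`, after an element of `F^r`; hence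
`a^n d(f x, f y) ≤ (a^m λ)^q a^r C ≤ a^m C` for a bound `C` of `d`, and `d̂` is finite. Precomposing with `f ∈ F`
shifts `F^n` into `F^(n+1)`, which costs exactly one factor `a`.
-/

section

variable {X : Type*}

theorem comps_add (F : Set (X → X)) (j k : ℕ) :
    comps F (j + k) = Set.image2 (· ∘ ·) (comps F j) (comps F k) := by
  induction k with
  | zero => simp [comps]
  | succ k ih =>
    rw [← add_assoc, comps, ih, comps]
    exact Set.image2_assoc fun _ _ _ => rfl

theorem comps_one (F : Set (X → X)) : comps F 1 = F := by
  simp [comps]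

theorem apply_le_oscFam {d : X → X → ℝ≥0∞} {G : Set (X → X)} {g : X → X} (hg : g ∈ G)
    (x y : X) : d (g x) (g y) ≤ oscFam d G (d x y) :=
  le_iSup₂_of_le g hg <| le_iSup₂_of_le x y <| le_iSup_of_le le_rfl le_rfl

theorem ENNReal.eq_zero_of_le_mul_of_lt_one {x c : ℝ≥0∞} (h : x ≤ c * x) (hc : c < 1)
    (hx : x ≠ ⊤) : x = 0 := by
  by_contra h0
  exact (h.trans_lt (ENNReal.mul_lt_mul_left h0 hx hc)).ne (one_mul x).symm

section Contracting

variable {d : X → X → ℝ≥0∞} {F : Set (X → X)} {m : ℕ} {lam : ℝ≥0∞}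

theorem apply_le_pow_mul_of_mem_comps_mul
    (hcontr : ∀ g ∈ comps F m, ∀ x y, d (g x) (g y) ≤ lam * d x y) (q : ℕ) {g : X → X}
    (hg : g ∈ comps F (m * q)) (x y : X) : d (g x) (g y) ≤ lam ^ q * d x y := by
  induction q generalizing g x y with
  | zero =>
    obtain rfl : g = id := hg
    simp
  | succ q ih =>
    rw [Nat.mul_succ, comps_add] at hg
    obtain ⟨g₁, hg₁, g₂, hg₂, rfl⟩ := hg
    calc d (g₁ (g₂ x)) (g₁ (g₂ y)) ≤ lam ^ q * d (g₂ x) (g₂ y) := ih hg₁ _ _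
      _ ≤ lam ^ q * (lam * d x y) := by gcongr; exact hcontr g₂ hg₂ x y
      _ = lam ^ (q + 1) * d x y := by rw [pow_succ, mul_assoc]

theorem pow_mul_apply_le_of_mem_comps {C a : ℝ≥0∞} (hC : ∀ x y, d x y ≤ C) (hCtop : C ≠ ⊤)
    (hcontr : ∀ g ∈ comps F m, ∀ x y, d (g x) (g y) ≤ lam * d x y)
    (ha : 1 ≤ a) (ham : a ^ m * lam < 1) {n : ℕ} {f : X → X} (hf : f ∈ comps F n)
    (x y : X) : a ^ n * d (f x) (f y) ≤ a ^ m * C := by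
  rcases Nat.eq_zero_or_pos m with rfl | hm
  · -- `F^0 = {id}`, so `d ≤ λ d` with `λ = a^0 λ < 1`: `d` vanishes.
    have hd : ∀ x y, d x y = 0 := fun x y =>
      ENNReal.eq_zero_of_le_mul_of_lt_one (hcontr id rfl x y) (by simpa using ham)
        (ne_top_of_le_ne_top hCtop (hC x y))
    simp [hd]
  have hn : m * (n / m) + n % m = n := Nat.div_add_mod n m
  have hpow : a ^ n = (a ^ m) ^ (n / m) * a ^ (n % m) := by rw [← pow_mul, ← pow_add, hn]
  rw [← hn, comps_add] at hf
  obtain ⟨g, hg, h, -, rfl⟩ := hf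
  calc a ^ n * d (g (h x)) (g (h y))
      ≤ a ^ n * (lam ^ (n / m) * C) := by
        gcongr
        exact (apply_le_pow_mul_of_mem_comps_mul hcontr _ hg _ _).trans (by gcongr; exact hC _ _)
    _ = (a ^ m * lam) ^ (n / m) * (a ^ (n % m) * C) := by
        rw [hpow, mul_pow]; ring
    _ ≤ 1 * (a ^ m * C) := by
        gcongr
        · exact pow_le_one₀ zero_le ham.le
        · exact (Nat.mod_lt n hm).le
    _ = a ^ m * C := one_mul _

end Contracting

/-- The pseudometric `d̂` of the statement. -/
noncomputable def weightedSupDist (d : X → X → ℝ≥0∞) (F : Set (X → X)) (a : ℝ≥0∞) (x y : X) :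
    ℝ≥0∞ :=
  ⨆ n, ⨆ f ∈ comps F n, a ^ n * d (f x) (f y)

namespace weightedSupDist

variable {d : X → X → ℝ≥0∞} {F : Set (X → X)} {a : ℝ≥0∞}

theorem le_of_mem_comps {n : ℕ} {f : X → X} (hf : f ∈ comps F n) (x y : X) :
    a ^ n * d (f x) (f y) ≤ weightedSupDist d F a x y :=
  le_iSup_of_le n <| le_iSup₂_of_le f hf le_rfl

theorem le_of_forall_le {x y : X} {B : ℝ≥0∞}
    (h : ∀ n, ∀ f ∈ comps F n, a ^ n * d (f x) (f y) ≤ B) : weightedSupDist d F a x y ≤ B :=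
  iSup_le fun n => iSup₂_le (h n)

theorem dist_le (x y : X) : d x y ≤ weightedSupDist d F a x y := by
  simpa using le_of_mem_comps (a := a) (show id ∈ comps F 0 from rfl) x y

theorem self_eq_zero (hrefl : ∀ x, d x x = 0) (x : X) : weightedSupDist d F a x x = 0 := by
  simp [weightedSupDist, hrefl]

theorem comm (hsymm : ∀ x y, d x y = d y x) (x y : X) :
    weightedSupDist d F a x y = weightedSupDist d F a y x := by
  simp only [weightedSupDist, hsymm]

theorem triangle (htri : ∀ x y z, d x z ≤ d x y + d y z) (x y z : X) :
    weightedSupDist d F a x z ≤ weightedSupDist d F a x y + weightedSupDist d F a y z :=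
  le_of_forall_le fun n f hf =>
    calc a ^ n * d (f x) (f z) ≤ a ^ n * d (f x) (f y) + a ^ n * d (f y) (f z) := by
          rw [← mul_add]; gcongr; exact htri _ _ _
      _ ≤ _ := add_le_add (le_of_mem_comps hf x y) (le_of_mem_comps hf y z)

theorem apply_le_inv_mul (ha0 : a ≠ 0) (hatop : a ≠ ⊤) {f : X → X} (hf : f ∈ F) (x y : X) :
    weightedSupDist d F a (f x) (f y) ≤ a⁻¹ * weightedSupDist d F a x y :=
  le_of_forall_le fun n g hg => by
    have hgf : g ∘ f ∈ comps F (n + 1) := by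
      rw [comps_add, comps_one]; exact Set.mem_image2_of_mem hg hf
    calc a ^ n * d (g (f x)) (g (f y)) = a⁻¹ * (a ^ (n + 1) * d ((g ∘ f) x) ((g ∘ f) y)) := by
          rw [pow_succ', ← mul_assoc, ← mul_assoc, ENNReal.inv_mul_cancel ha0 hatop, one_mul]
          rfl
      _ ≤ a⁻¹ * weightedSupDist d F a x y := by gcongr; exact le_of_mem_comps hgf x y

end weightedSupDist

end

theorem dhat_banach_general {X : Type*} (d : X → X → ℝ≥0∞)
    (hrefl : ∀ x, d x x = 0) (hsymm : ∀ x y, d x y = d y x)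
    (htri : ∀ x y z, d x z ≤ d x y + d y z)
    (hbd : ∃ C : ℝ≥0∞, C ≠ ⊤ ∧ ∀ x y, d x y ≤ C)
    (F : Set (X → X))
    (m : ℕ) (lam : ℝ≥0∞)
    (hosc : ∀ t : ℝ≥0∞, oscFam d (comps F m) t ≤ lam * t)
    (a : ℝ≥0∞) (ha1 : 1 < a) (hatop : a ≠ ⊤) (ham : a ^ m * lam < 1) :
    let dhat : X → X → ℝ≥0∞ := fun x y => ⨆ n, ⨆ f ∈ comps F n, a ^ n * d (f x) (f y)
    (∀ x y : X, d x y ≤ dhat x y) ∧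
    (∀ x y : X, dhat x y ≠ ⊤) ∧
    (∀ x : X, dhat x x = 0) ∧
    (∀ x y : X, dhat x y = dhat y x) ∧
    (∀ x y z : X, dhat x z ≤ dhat x y + dhat y z) ∧
    (∀ f ∈ F, ∀ x y : X, dhat (f x) (f y) ≤ a⁻¹ * dhat x y) := by
  obtain ⟨C, hCtop, hC⟩ := hbd
  have hcontr : ∀ g ∈ comps F m, ∀ x y, d (g x) (g y) ≤ lam * d x y := fun g hg x y =>
    (apply_le_oscFam hg x y).trans (hosc _)
  have hfinite (x y : X) : weightedSupDist d F a x y ≠ ⊤ :=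
    ne_top_of_le_ne_top (mul_ne_top (pow_ne_top hatop) hCtop) <|
      weightedSupDist.le_of_forall_le fun _ _ hf =>
        pow_mul_apply_le_of_mem_comps hC hCtop hcontr ha1.le ham hf x y
  exact ⟨weightedSupDist.dist_le, hfinite, weightedSupDist.self_eq_zero hrefl,
    weightedSupDist.comm hsymm, weightedSupDist.triangle htri,
    fun f hf => weightedSupDist.apply_le_inv_mul (zero_lt_one.trans ha1).ne' hatop hf⟩

/-- If `F^m` is Banach contracting with constant `λ < 1` for a bounded pseudometric `d`,
and `a > 1` satisfies `a^m * λ < 1`, then `d̂(x,y) = sup_n sup_{f ∈ F^n} a^n d(f x, f y)` is a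
well-defined pseudometric with `d̂ ≥ d`, and every `f ∈ F` is Banach contracting with
constant `1/a` with respect to `d̂`. -/
theorem dhat_banach {X : Type*} (d : X → X → ℝ≥0∞)
    (hrefl : ∀ x, d x x = 0) (hsymm : ∀ x y, d x y = d y x)
    (htri : ∀ x y z, d x z ≤ d x y + d y z)
    (hbd : ∃ C : ℝ≥0∞, C ≠ ⊤ ∧ ∀ x y, d x y ≤ C)
    (F : Set (X → X)) (hfin : F.Finite)
    (m : ℕ) (lam : ℝ≥0∞) (hlam : lam < 1)
    (hosc : ∀ t : ℝ≥0∞, oscFam d (comps F m) t ≤ lam * t)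
    (a : ℝ≥0∞) (ha1 : 1 < a) (hatop : a ≠ ⊤) (ham : a ^ m * lam < 1) :
    let dhat : X → X → ℝ≥0∞ := fun x y => ⨆ n, ⨆ f ∈ comps F n, a ^ n * d (f x) (f y)
    (∀ x y : X, d x y ≤ dhat x y) ∧
    (∀ x y : X, dhat x y ≠ ⊤) ∧
    (∀ x : X, dhat x x = 0) ∧
    (∀ x y : X, dhat x y = dhat y x) ∧
    (∀ x y z : X, dhat x z ≤ dhat x y + dhat y z) ∧
    (∀ f ∈ F, ∀ x y : X, dhat (f x) (f y) ≤ a⁻¹ * dhat x y) :=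
  dhat_banach_general d hrefl hsymm htri hbd F m lam hosc a ha1 hatop ham
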